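/- arXiv:1310.3992 — 6 statements merged into one kernel-verified Lean document; each statement's English description precedes it below -/
import Mathlib

section
/- Let d = (d_1, ..., d_n) be a decreasing sequence of positive integers with even sum, let a = d_1 be its maximal element and b = d_n its minimal element. If n·b ≥ (a + b + 1)²/4, then d is graphic. -/
/-!
Every Erdős–Gallai inequality follows from `k a ≤ k (k - 1) + (n - k) min(b, k)`: for `k ≤ b` this
is `a < n`, and for `k > b` it is `(2k - a - b - 1)² ≥ (a + b + 1)² - 4nb`. So it suffices to prove
the Erdős–Gallai theorem, which we do following Choudum, by induction on the degree sum. Lower by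
one the last term `t` of the initial block of maximal terms and the last positive term `u`. The
reduced sequence is still decreasing, and it still satisfies the inequalities because at the
affected `k ≤ t` the original ones hold with enough room (by parity in the tight case), so it is
realized by some graph `G`. If `tu` is not an edge of `G`, add it. Otherwise there is a vertex `w`
not adjacent to `t` of larger degree than `u`, hence a neighbour `x` of `w` outside `N(u) ∪ {u}`,
and the swap `wx ↦ tw, ux` raises exactly the degrees of `t` and `u`.
-/

/-- A sequence of length `n` is graphic if it is the degree sequence of some
finite simple graph on `n` vertices. -/
def IsGraphic {n : ℕ} (d : Fin n → ℕ) : Prop :=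
  ∃ G : SimpleGraph (Fin n), ∀ i, (G.neighborSet i).ncard = d i

open Finset

namespace SimpleGraph

variable {V : Type*} {G : SimpleGraph V} {s t : V}

lemma neighborSet_sup_edge_left (hst : s ≠ t) :
    (G ⊔ edge s t).neighborSet s = insert t (G.neighborSet s) := by
  ext v
  simp only [neighborSet_sup, Set.mem_union, mem_neighborSet, edge_adj, Set.mem_insert_iff]
  grind

variable [Finite V]

lemma exists_mem_ne_not_adj (t : V) {A : Finset V} (hA : (G.neighborSet t).ncard + 1 < #A) :
    ∃ w ∈ A, w ≠ t ∧ ¬G.Adj t w := by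
  obtain ⟨w, hwA, hw⟩ := Set.exists_mem_notMem_of_ncard_lt_ncard (s := insert t (G.neighborSet t))
    (t := (A : Set V)) (by rw [Set.ncard_coe_finset]; exact (Set.ncard_insert_le _ _).trans_lt hA)
  simp only [Set.mem_insert_iff, mem_neighborSet, not_or] at hw
  exact ⟨w, hwA, hw.1, hw.2⟩

variable [DecidableEq V]

lemma ncard_neighborSet_sup_edge (hst : s ≠ t) (h : ¬G.Adj s t) (v : V) :
    ((G ⊔ edge s t).neighborSet v).ncard =
      (G.neighborSet v).ncard + (if v = s then 1 else 0) + (if v = t then 1 else 0) := by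
  rcases eq_or_ne v s with rfl | hvs
  · rw [neighborSet_sup_edge_left hst, Set.ncard_insert_of_notMem (show t ∉ G.neighborSet v from h)]
    simp [hst]
  rcases eq_or_ne v t with rfl | hvt
  · rw [edge_comm, neighborSet_sup_edge_left hst.symm,
      Set.ncard_insert_of_notMem (show s ∉ G.neighborSet v from fun h' => h h'.symm)]
    simp [hvs]
  · have : (G ⊔ edge s t).neighborSet v = G.neighborSet v := by
      ext w; simp [edge_adj, hvs, hvt]
    simp [this, hvs, hvt]

lemma ncard_neighborSet_sdiff_edge (h : G.Adj s t) (v : V) :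
    (G.neighborSet v).ncard =
      ((G \ edge s t).neighborSet v).ncard + (if v = s then 1 else 0) +
        (if v = t then 1 else 0) := by
  conv_lhs => rw [← sdiff_sup_cancel ((edge_le_iff G).2 (Or.inr h))]
  exact ncard_neighborSet_sup_edge h.ne (by simp [edge_adj, h.ne]) v

theorem exists_ncard_neighborSet_eq_add_pair {t u : V} (htu : t ≠ u)
    (hw : G.Adj t u → ∃ w, w ≠ t ∧ ¬G.Adj t w ∧ (G.neighborSet u).ncard < (G.neighborSet w).ncard) :
    ∃ H : SimpleGraph V, ∀ v, (H.neighborSet v).ncard =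
      (G.neighborSet v).ncard + (if v = t then 1 else 0) + (if v = u then 1 else 0) := by
  by_cases hadj : G.Adj t u
  swap
  · exact ⟨G ⊔ edge t u, ncard_neighborSet_sup_edge htu hadj⟩
  obtain ⟨w, hwt, htw, hdeg⟩ := hw hadj
  -- otherwise the neighbourhood of `w` would be that of `u` plus `u`, and would contain `t`
  have hx : ∃ x, G.Adj w x ∧ x ≠ u ∧ ¬G.Adj u x := by
    by_contra! hx
    have hsub : G.neighborSet w ⊆ insert u (G.neighborSet u) := by
      intro x hwx
      by_cases hxu : x = u
      · exact hxu ▸ Set.mem_insert _ _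
      · exact Set.mem_insert_of_mem _ (hx x hwx hxu)
    have heq := Set.eq_of_subset_of_ncard_le hsub ((Set.ncard_insert_le _ _).trans (by omega))
    have hwt : t ∈ G.neighborSet w := heq ▸ Set.mem_insert_of_mem u hadj.symm
    exact htw hwt.symm
  obtain ⟨x, hwx, hxu, hux⟩ := hx
  have h₀ : ¬(G \ edge w x).Adj t w := fun h => htw h.1
  have h₁ : ¬(G \ edge w x ⊔ edge t w).Adj u x := by
    rintro (h | h)
    · exact hux h.1
    · have hwu : w ≠ u := by rintro rfl; exact htw hadj
      simp only [edge_adj] at h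
      grind
  refine ⟨G \ edge w x ⊔ edge t w ⊔ edge u x, fun v => ?_⟩
  rw [ncard_neighborSet_sup_edge hxu.symm h₁, ncard_neighborSet_sup_edge hwt.symm h₀,
    ncard_neighborSet_sdiff_edge hwx v]
  split_ifs <;> omega

end SimpleGraph

def ErdosGallai (n : ℕ) (D : ℕ → ℕ) : Prop :=
  ∀ k ≤ n, ∑ i ∈ range k, D i ≤ k * (k - 1) + ∑ i ∈ Ico k n, min (D i) k

section Arithmetic

lemma mul_sub_one_add_sub_mul {k p : ℕ} (h : k ≤ p) : k * (k - 1) + (p - k) * k = k * (p - 1) := by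
  rcases k with _ | k
  · simp
  rw [Nat.add_sub_cancel, Nat.mul_comm (p - (k + 1)), ← Nat.mul_add]
  congr 1
  omega

lemma sum_Ico_min_le (D : ℕ → ℕ) {k q n : ℕ} (j : ℕ) (hkq : k ≤ q) (hqn : q ≤ n) :
    ∑ i ∈ Ico k n, min (D i) j ≤ (q - k) * j + ∑ i ∈ Ico q n, D i := by
  rw [← sum_Ico_consecutive _ hkq hqn, ← Nat.card_Ico k q, ← smul_eq_mul, ← sum_const]
  gcongr with i _ i _
  · exact min_le_right _ _
  · exact min_le_left _ _

variable {D : ℕ → ℕ}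

lemma sum_range_eq_mul_of_forall_lt {a k t : ℕ} (hblock : ∀ i < t, D i = a) (hkt : k ≤ t) :
    ∑ i ∈ range k, D i = k * a := by
  rw [sum_congr rfl fun i hi => hblock i ((mem_range.1 hi).trans_le hkt), sum_const, card_range,
    smul_eq_mul]

lemma sum_Ico_min_eq {k q n j : ℕ} (hkq : k ≤ q) (hqn : q ≤ n)
    (hbig : ∀ i ∈ Ico k q, j ≤ D i) (hsmall : ∀ i ∈ Ico q n, D i ≤ j) :
    ∑ i ∈ Ico k n, min (D i) j = (q - k) * j + ∑ i ∈ Ico q n, D i := by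
  rw [← sum_Ico_consecutive _ hkq hqn, ← Nat.card_Ico k q, ← smul_eq_mul, ← sum_const]
  congr 1
  · exact sum_congr rfl fun i hi => min_eq_right (hbig i hi)
  · exact sum_congr rfl fun i hi => min_eq_left (hsmall i hi)

lemma erdosGallai_lt_of_block {n t a k q : ℕ} (hD : Antitone D) (hEG : ErdosGallai n D)
    (hblock : ∀ i < t, D i = a) (hkt : k < t) (hka : k < a)
    (hqn : q < n) (hDq : D q ≤ k) (hq : 0 < D q) :
    ∑ i ∈ range k, D i < k * (k - 1) + ∑ i ∈ Ico k n, min (D i) k := by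
  have hex : ∃ p, D p ≤ k := ⟨q, hDq⟩
  obtain ⟨p, hp, hpq, hbig⟩ : ∃ p, D p ≤ k ∧ p ≤ q ∧ ∀ i < p, k < D i :=
    ⟨Nat.find hex, Nat.find_spec hex, Nat.find_min' hex hDq,
      fun _ hi => not_le.1 (Nat.find_min hex hi)⟩
  have htp : t ≤ p := by
    by_contra! h
    have := hblock p h
    omega
  have hsmall : ∀ i ∈ Ico p n, D i ≤ k := fun i hi => (hD (mem_Ico.1 hi).1).trans hp
  set T := ∑ i ∈ Ico p n, D i
  have hT : 0 < T := (hq.trans_le (hD hpq)).trans_le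
    (single_le_sum (fun i _ => Nat.zero_le _) (mem_Ico.2 ⟨le_rfl, by omega⟩))
  have hRk : ∑ i ∈ Ico k n, min (D i) k = (p - k) * k + T :=
    sum_Ico_min_eq (by omega) (by omega) (fun i hi => (hbig i (mem_Ico.1 hi).2).le) hsmall
  have hRt : t * a ≤ t * (t - 1) + ((p - t) * t + T) := by
    have := hEG t (by omega)
    rw [sum_range_eq_mul_of_forall_lt hblock le_rfl] at this
    exact this.trans (by gcongr; exact sum_Ico_min_le D t htp (by omega))
  rw [sum_range_eq_mul_of_forall_lt hblock hkt.le, hRk, ← add_assoc,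
    mul_sub_one_add_sub_mul (by omega)]
  rw [← add_assoc, mul_sub_one_add_sub_mul htp] at hRt
  -- if `a ≥ p`, the inequality at `t > k` gives `T ≥ t (a - p + 1) > k (a - p + 1)`
  rcases le_or_gt a (p - 1) with hap | hpa
  · nlinarith
  · obtain ⟨c, rfl⟩ : ∃ c, a = p - 1 + c := ⟨a - (p - 1), by omega⟩
    nlinarith

lemma erdosGallai_add_two_le_of_block {n t a k : ℕ} (hD : Antitone D)
    (heven : Even (∑ i ∈ range n, D i)) (hblock : ∀ i < t, D i = a) (htn : t < n) (hDt : 0 < D t)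
    (hak : a ≤ k) (hkt : k < t) :
    ∑ i ∈ range k, D i + 2 ≤ k * (k - 1) + ∑ i ∈ Ico k n, min (D i) k := by
  have hle : ∀ i, D i ≤ a := fun i => (hblock 0 (by omega)) ▸ hD (Nat.zero_le i)
  set S := ∑ i ∈ Ico t n, D i
  have hS : 0 < S :=
    hDt.trans_le (single_le_sum (fun i _ => Nat.zero_le _) (mem_Ico.2 ⟨le_rfl, htn⟩))
  have hsum : ∑ i ∈ range n, D i = t * a + S := by
    rw [range_eq_Ico, ← sum_Ico_consecutive _ (Nat.zero_le t) htn.le, ← range_eq_Ico,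
      sum_range_eq_mul_of_forall_lt hblock le_rfl]
  have hR : ∑ i ∈ Ico k n, min (D i) k = (t - k) * a + S := by
    rw [← sum_Ico_consecutive _ hkt.le htn.le, ← Nat.card_Ico k t, ← smul_eq_mul, ← sum_const]
    congr 1
    · exact sum_congr rfl fun i hi => by rw [hblock i (mem_Ico.1 hi).2]; exact min_eq_left hak
    · exact sum_congr rfl fun i _ => min_eq_left ((hle i).trans hak)
  have ha : 0 < a := hDt.trans_le (hle t)
  rw [sum_range_eq_mul_of_forall_lt hblock hkt.le, hR]
  rcases hak.lt_or_eq with hak | rfl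
  · have h1 : k * a ≤ k * (k - 1) := Nat.mul_le_mul_left k (by omega)
    have h2 : 0 < (t - k) * a := Nat.mul_pos (by omega) ha
    omega
  have haa : a * (a - 1) + a = a * a := by
    simpa [Nat.mul_comm] using mul_sub_one_add_sub_mul (Nat.le_succ a)
  rcases (show t = a + 1 ∨ a + 2 ≤ t by omega) with rfl | hat
  · -- tight case: the parity of the degree sum forces `S ≥ 2`
    have hSeven : Even S := by
      rw [hsum] at heven
      exact (Nat.even_add.1 heven).1 (by simpa [Nat.mul_comm] using Nat.even_mul_succ_self a)
    obtain ⟨r, hr⟩ := hSeven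
    simp only [Nat.add_sub_cancel_left, Nat.one_mul]
    omega
  · have : 2 * a ≤ (t - a) * a := Nat.mul_le_mul_right a (by omega)
    omega

end Arithmetic

section Reduction

variable {D D' : ℕ → ℕ} {t u : ℕ}

lemma sum_eq_add_of_eq_add
    (hD' : ∀ i, D i = D' i + (if i = t then 1 else 0) + (if i = u then 1 else 0)) (F : Finset ℕ) :
    ∑ i ∈ F, D i = ∑ i ∈ F, D' i + (if t ∈ F then 1 else 0) + (if u ∈ F then 1 else 0) := by
  simp only [hD', sum_add_distrib, sum_ite_eq']

lemma sum_min_le_add_of_eq_add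
    (hD' : ∀ i, D i = D' i + (if i = t then 1 else 0) + (if i = u then 1 else 0))
    (F : Finset ℕ) (k : ℕ) :
    ∑ i ∈ F, min (D i) k ≤ ∑ i ∈ F, min (D' i) k +
      (if t ∈ F ∧ D' t < k then 1 else 0) + (if u ∈ F ∧ D' u < k then 1 else 0) := by
  have key : ∀ i, min (D i) k ≤ min (D' i) k + (if i = t then (if D' t < k then 1 else 0) else 0)
      + (if i = u then (if D' u < k then 1 else 0) else 0) := by
    intro i
    have := hD' i
    split_ifs at this ⊢ <;> subst_vars <;> omega
  refine (sum_le_sum fun i _ => key i).trans_eq ?_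
  simp only [sum_add_distrib, sum_ite_eq', ite_and]

theorem ErdosGallai.of_eq_add {n a : ℕ} (hD : Antitone D) (hEG : ErdosGallai n D)
    (heven : Even (∑ i ∈ range n, D i)) (hblock : ∀ i ≤ t, D i = a) (htu : t < u) (hun : u < n)
    (hu : 0 < D u)
    (hD' : ∀ i, D i = D' i + (if i = t then 1 else 0) + (if i = u then 1 else 0)) :
    ErdosGallai n D' := by
  intro k hk
  have hL := sum_eq_add_of_eq_add hD' (range k)
  have hR := sum_min_le_add_of_eq_add hD' (Ico k n) k
  have hEGk := hEG k hk
  have hta := hblock t le_rfl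
  have hDt : D' t = a - 1 := by have := hD' t; simp only [htu.ne, ↓reduceIte] at this; omega
  have hDu : D' u = D u - 1 := by have := hD' u; simp only [htu.ne', ↓reduceIte] at this; omega
  have hua : D u ≤ a := hta ▸ hD htu.le
  simp only [mem_range, mem_Ico, hDt, hDu] at hL hR
  rcases lt_or_ge t k with htk | hkt
  · split_ifs at hL hR <;> omega
  have hblock' : ∀ i < t + 1, D i = a := fun i hi => hblock i (Nat.lt_succ_iff.1 hi)
  simp only [show k ≤ t ∧ t < n by omega, show k ≤ u ∧ u < n by omega, show ¬t < k by omega,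
    show ¬u < k by omega, true_and, if_false, add_zero] at hL hR
  rcases lt_or_ge k (D u) with hku | hku
  · rw [if_neg (by omega), if_neg (by omega)] at hR
    omega
  rcases lt_or_ge k a with hka | hak
  · have := erdosGallai_lt_of_block hD hEG hblock' (by omega) hka hun hku hu
    rw [if_neg (by omega), if_pos (by omega)] at hR
    omega
  · have := erdosGallai_add_two_le_of_block hD heven hblock' (by omega)
      (hu.trans_le (hD (show t + 1 ≤ u by omega))) hak (by omega)
    rw [if_pos (by omega), if_pos (by omega)] at hR
    omega

lemma antitone_of_eq_add (hD : Antitone D) (htu : t < u) (ht : ∀ j, t < j → j ≠ u → D j < D t)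
    (hu : ∀ j, u < j → D j < D u)
    (hD' : ∀ i, D i = D' i + (if i = t then 1 else 0) + (if i = u then 1 else 0)) :
    Antitone D' := by
  intro i j hij
  have hi := hD' i
  have hj := hD' j
  have hDij := hD hij
  have hDtu := hD htu.le
  split_ifs at hi hj <;> subst_vars <;> first | omega | (have := ht j; have := hu j; omega)

end Reduction

lemma exists_reduction_indices {n : ℕ} {D : ℕ → ℕ} (hD : Antitone D)
    (hzero : ∀ i, n ≤ i → D i = 0) (hEG : ErdosGallai n D) (h0 : 0 < D 0) :
    ∃ t u, t < u ∧ u < n ∧ 0 < D u ∧ D 0 ≤ u ∧ (∀ i ≤ t, D i = D 0) ∧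
      (∀ j, t < j → j ≠ u → D j < D 0) ∧ ∀ j, u < j → D j = 0 := by
  have hexs : ∃ s, D s = 0 := ⟨n, hzero n le_rfl⟩
  obtain ⟨s, hs, hsn, hpos⟩ : ∃ s, D s = 0 ∧ s ≤ n ∧ ∀ i < s, 0 < D i :=
    ⟨Nat.find hexs, Nat.find_spec hexs, Nat.find_min' hexs (hzero n le_rfl),
      fun _ hi => Nat.pos_of_ne_zero (Nat.find_min hexs hi)⟩
  have hexK : ∃ K, D K < D 0 := ⟨s, hs ▸ h0⟩
  obtain ⟨K, hK, hmax⟩ : ∃ K, D K < D 0 ∧ ∀ i < K, D i = D 0 :=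
    ⟨Nat.find hexK, Nat.find_spec hexK,
      fun _ hi => le_antisymm (hD (Nat.zero_le _)) (not_lt.1 (Nat.find_min hexK hi))⟩
  have hs1 : 1 ≤ s := Nat.pos_of_ne_zero (by rintro rfl; omega)
  have hK1 : 1 ≤ K := Nat.pos_of_ne_zero (by rintro rfl; omega)
  have hzero' : ∀ j, s ≤ j → D j = 0 := fun j hj => Nat.eq_zero_of_le_zero (hs ▸ hD hj)
  -- the inequality at `1` says that `D 0` is at most the number of other positive terms
  have has : D 0 ≤ s - 1 := by
    have h1 := (hEG 1 (by omega)).trans (Nat.add_le_add_left (sum_Ico_min_le D 1 hs1 hsn) _)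
    rw [sum_eq_zero fun i hi => hzero' i (mem_Ico.1 hi).1] at h1
    simpa using h1
  refine ⟨min K (s - 1) - 1, s - 1, by omega, by omega, hpos _ (by omega), has,
    fun i hi => hmax i (by omega), fun j hj hju => ?_, fun j hj => hzero' j (by omega)⟩
  rcases le_or_gt K (s - 1) with hKs | hKs
  · exact (hD (show K ≤ j by omega)).trans_lt hK
  · rw [hzero' j (by omega)]
    exact h0

lemma isGraphic_add_pair {n t u : ℕ} {D : ℕ → ℕ} (hD : IsGraphic fun v : Fin n => D v)
    (htu : t < u) (hun : u < n) (ht : D t < u) (hu : ∀ w ≤ u, w ≠ t → w ≠ u → D u < D w) :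
    IsGraphic fun v : Fin n => D v + (if v = t then 1 else 0) + (if v = u then 1 else 0) := by
  obtain ⟨G, hG⟩ := hD
  obtain ⟨H, hH⟩ := G.exists_ncard_neighborSet_eq_add_pair (t := ⟨t, htu.trans hun⟩)
    (u := ⟨u, hun⟩) (by simp [Fin.ext_iff, htu.ne]) fun hadj => by
      obtain ⟨w, hwA, hwt, htw⟩ := G.exists_mem_ne_not_adj ⟨t, htu.trans hun⟩ (A := Iic ⟨u, hun⟩)
        (by rw [Fin.card_Iic, hG]; exact Nat.succ_lt_succ ht)
      have hwu : (w : ℕ) ≠ u := fun h => htw ((Fin.ext h : w = ⟨u, hun⟩) ▸ hadj)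
      exact ⟨w, hwt, htw, by
        rw [hG, hG]; exact hu w (Fin.le_def.1 (mem_Iic.1 hwA)) (fun h => hwt (Fin.ext h)) hwu⟩
  exact ⟨H, fun v => by rw [hH, hG]; simp [Fin.ext_iff]⟩

theorem isGraphic_of_erdosGallai {n : ℕ} {D : ℕ → ℕ} (hD : Antitone D)
    (hzero : ∀ i, n ≤ i → D i = 0) (heven : Even (∑ i ∈ range n, D i)) (hEG : ErdosGallai n D) :
    IsGraphic fun i : Fin n => D i := by
  induction hM : ∑ i ∈ range n, D i using Nat.strong_induction_on generalizing D with
  | _ M ih =>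
  rcases Nat.eq_zero_or_pos (D 0) with h0 | h0
  · exact ⟨⊥, fun v => by simpa using (Nat.eq_zero_of_le_zero (h0 ▸ hD (Nat.zero_le v))).symm⟩
  obtain ⟨t, u, htu, hun, hu, hau, hblock, hafter, hlast⟩ :=
    exists_reduction_indices hD hzero hEG h0
  set D' : ℕ → ℕ := fun i => D i - (if i = t then 1 else 0) - (if i = u then 1 else 0)
  have hD' : ∀ i, D i = D' i + (if i = t then 1 else 0) + (if i = u then 1 else 0) := by
    intro i
    have := hblock t le_rfl
    simp only [D']
    split_ifs <;> subst_vars <;> omega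
  have hsum := sum_eq_add_of_eq_add hD' (range n)
  simp only [mem_range, show t < n by omega, hun, if_true] at hsum
  have hG := ih (M - 2) (by omega)
    (antitone_of_eq_add hD htu (fun j hj hju => hblock t le_rfl ▸ hafter j hj hju)
      (fun j hj => hlast j hj ▸ hu) hD')
    (fun i hi => by have := hD' i; have := hzero i hi; omega)
    (by obtain ⟨r, hr⟩ := heven; exact ⟨r - 1, by omega⟩)
    (ErdosGallai.of_eq_add hD hEG heven hblock htu hun hu hD') (by omega)
  have hD't : D' t = D 0 - 1 := by simp [D', htu.ne, hblock t le_rfl]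
  have hD'u : D' u = D u - 1 := by simp [D', htu.ne']
  convert isGraphic_add_pair hG htu hun (by omega) fun w hwu hwt hw => ?_ using 2 with v
  · exact hD' v
  · have := hD (show w ≤ u from hwu)
    simp only [D', hwt, hw, ↓reduceIte]
    omega

theorem erdosGallai_of_sq_le {n a b : ℕ} {D : ℕ → ℕ} (ha : ∀ i < n, D i ≤ a)
    (hb : ∀ i < n, b ≤ D i) (h : (a + b + 1) ^ 2 ≤ 4 * (n * b)) : ErdosGallai n D := by
  intro k hk
  have hL : ∑ i ∈ range k, D i ≤ k * a := by
    simpa using sum_le_sum fun i hi => ha i ((mem_range.1 hi).trans_le hk)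
  have hR : (n - k) * min b k ≤ ∑ i ∈ Ico k n, min (D i) k := by
    simpa using sum_le_sum fun i hi => min_le_min_right k (hb i (mem_Ico.1 hi).2)
  suffices k * a ≤ k * (k - 1) + (n - k) * min b k by omega
  have hb0 : 0 < b := by
    rcases Nat.eq_zero_or_pos b with rfl | hb0
    · simp at h
    · exact hb0
  -- `(a + b + 1)² ≥ 4 (a + 1) b`, so `a < n`
  have han : a + 1 ≤ n := by
    refine Nat.le_of_mul_le_mul_right (c := b) ?_ hb0
    have : ((a : ℤ) + 1) * b ≤ n * b := by
      zify at h
      nlinarith [sq_nonneg ((a : ℤ) + 1 - b)]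
    exact_mod_cast this
  rcases le_or_gt k b with hkb | hbk
  · rw [min_eq_right hkb, mul_sub_one_add_sub_mul hk]
    exact Nat.mul_le_mul_left k (by omega)
  · rw [min_eq_left hbk.le]
    zify [hk, (show 1 ≤ k by omega)] at h ⊢
    nlinarith [sq_nonneg (2 * (k : ℤ) - a - b - 1)]

/-- Zverovich–Zverovich: a decreasing sequence of positive integers with even sum,
maximal element `a` and minimal element `b`, is graphic if `n·b ≥ (a+b+1)²/4`. -/
theorem zverovich_zverovich {n : ℕ} (hn : 0 < n) (d : Fin n → ℕ) (a b : ℕ)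
    (ha : a = d ⟨0, hn⟩) (hb : b = d ⟨n - 1, by omega⟩)
    (hdec : Antitone d) (heven : Even (∑ i, d i))
    (hineq : 4 * (n * b) ≥ (a + b + 1) ^ 2) :
    IsGraphic d := by
  set D : ℕ → ℕ := fun i => if h : i < n then d ⟨i, h⟩ else 0
  have hD : ∀ i : Fin n, D i = d i := fun i => dif_pos i.2
  have hanti : Antitone D := by
    intro i j hij
    simp only [D]
    split_ifs with hj hi
    · exact hdec (Fin.mk_le_mk.2 hij)
    · omega
    · exact Nat.zero_le _
    · exact le_rfl
  have hsum : ∑ i ∈ range n, D i = ∑ i, d i := by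
    rw [← Fin.sum_univ_eq_sum_range]
    exact sum_congr rfl fun i _ => hD i
  have hEG : ErdosGallai n D := erdosGallai_of_sq_le (a := a) (b := b)
    (fun i hi => ha ▸ hD ⟨i, hi⟩ ▸ hdec (Fin.le_def.2 (Nat.zero_le _)))
    (fun i hi => hb ▸ hD ⟨i, hi⟩ ▸ hdec (Fin.le_def.2 (show i ≤ n - 1 by omega))) hineq
  simpa [hD] using
    isGraphic_of_erdosGallai hanti (fun i hi => dif_neg (by omega)) (hsum ▸ heven) hEG
end

section
/- Let (a, b, n) be a triple of positive integers with b < a < n such that the following inequality FAILS: n·b ≥ ⌊(a + b + 1)²/4⌋ − 1 if b is odd or a + b ≡ 1 (mod 4), and n·b ≥ ⌊(a + b + 1)²/4⌋ otherwise. Then there exists a nongraphic decreasing sequence of positive integers of length n having even sum, with maximal element a and minimal element b. -/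
/-- The refined Zverovich–Zverovich bound: `n·b ≥ ⌊(a+b+1)²/4⌋ - 1` if `b` is odd or
`a + b ≡ 1 (mod 4)`, and `n·b ≥ ⌊(a+b+1)²/4⌋` otherwise. -/
def ZZCond (a b n : ℕ) : Prop :=
  if Odd b ∨ (a + b) % 4 = 1 then n * b ≥ (a + b + 1) ^ 2 / 4 - 1
  else n * b ≥ (a + b + 1) ^ 2 / 4

open Finset

namespace SimpleGraph

variable {V : Type*} (G : SimpleGraph V)

theorem ncard_neighborSet_eq_degree (v : V) [Fintype (G.neighborSet v)] :
    (G.neighborSet v).ncard = G.degree v := by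
  rw [← G.card_neighborSet_eq_degree, Set.ncard_eq_toFinset_card', Set.toFinset_card]

variable [Fintype V] [DecidableEq V] [DecidableRel G.Adj]

theorem sum_degree_le_erdos_gallai (S : Finset V) :
    ∑ v ∈ S, G.degree v ≤ #S * (#S - 1) + ∑ v ∈ Sᶜ, min (G.degree v) #S := by
  have inside : ∀ v ∈ S, #(G.neighborFinset v ∩ S) ≤ #S - 1 := fun v hv => by
    rw [← card_erase_of_mem hv]
    exact card_le_card fun u hu => mem_erase.2
      ⟨(G.ne_of_adj ((G.mem_neighborFinset v u).1 (mem_inter.1 hu).1)).symm, (mem_inter.1 hu).2⟩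
  have crossing :
      ∑ v ∈ S, #(G.neighborFinset v \ S) = ∑ u ∈ Sᶜ, #(G.neighborFinset u ∩ S) := by
    convert sum_card_bipartiteAbove_eq_sum_card_bipartiteBelow (s := S) (t := Sᶜ) (r := G.Adj)
      using 3 with v _ u _
    · ext w; simp [bipartiteAbove, and_comm]
    · ext w; simp [bipartiteBelow, G.adj_comm, and_comm]
  calc ∑ v ∈ S, G.degree v
      = ∑ v ∈ S, #(G.neighborFinset v ∩ S) + ∑ v ∈ S, #(G.neighborFinset v \ S) := by
        rw [← sum_add_distrib]
        exact sum_congr rfl fun v _ => by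
          rw [← card_neighborFinset_eq_degree, add_comm, card_sdiff_add_card_inter]
    _ ≤ ∑ _v ∈ S, (#S - 1) + ∑ u ∈ Sᶜ, min (G.degree u) #S := by
        rw [crossing]
        gcongr with v hv u
        · exact inside v hv
        · exact le_min (card_neighborFinset_eq_degree G u ▸ card_le_card inter_subset_left)
            (card_le_card inter_subset_right)
    _ = #S * (#S - 1) + ∑ u ∈ Sᶜ, min (G.degree u) #S := by rw [sum_const, smul_eq_mul]

end SimpleGraph

theorem not_isGraphic_of_sum_lt {n : ℕ} {d : Fin n → ℕ} (S : Finset (Fin n))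
    (h : #S * (#S - 1) + ∑ v ∈ Sᶜ, min (d v) #S < ∑ v ∈ S, d v) : ¬ IsGraphic d := by
  classical
  rintro ⟨G, hG⟩
  have := G.sum_degree_le_erdos_gallai S
  simp only [← G.ncard_neighborSet_eq_degree, hG] at this
  omega

def extremalSeq (n k a b e : ℕ) (i : Fin n) : ℕ :=
  if (i : ℕ) < k then a else if (i : ℕ) = k then b + e else b

section extremalSeq

variable {n k a b e : ℕ}

theorem extremalSeq_antitone (h : b + e ≤ a) : Antitone (extremalSeq n k a b e) := by
  intro i j hij
  have : (i : ℕ) ≤ j := hij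
  unfold extremalSeq
  split_ifs <;> omega

theorem sum_extremalSeq_Iio (hk : k < n) :
    ∑ i ∈ Iio ⟨k, hk⟩, extremalSeq n k a b e i = k * a := by
  have : ∀ i ∈ Iio (⟨k, hk⟩ : Fin n), extremalSeq n k a b e i = a := fun i hi =>
    if_pos (mem_Iio.1 hi)
  rw [sum_congr rfl this, sum_const, Fin.card_Iio, smul_eq_mul]

theorem sum_extremalSeq_compl_Iio (hk : k < n) :
    ∑ i ∈ (Iio ⟨k, hk⟩)ᶜ, extremalSeq n k a b e i = (n - k) * b + e := by
  have : ∀ i ∈ (Iio (⟨k, hk⟩ : Fin n))ᶜ,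
      extremalSeq n k a b e i = b + if i = ⟨k, hk⟩ then e else 0 := by
    intro i hi
    have : ¬ (i : ℕ) < k := by simpa [Fin.lt_def] using hi
    simp only [extremalSeq, Fin.ext_iff]
    split_ifs <;> omega
  rw [sum_congr rfl this, sum_add_distrib, sum_const, card_compl, Fin.card_Iio, sum_ite_eq',
    if_pos (by simp), smul_eq_mul, Fintype.card_fin]

theorem not_isGraphic_extremalSeq (hk : k < n) (h : k * (k - 1) + ((n - k) * b + e) < k * a) :
    ¬ IsGraphic (extremalSeq n k a b e) := by
  refine not_isGraphic_of_sum_lt (Iio ⟨k, hk⟩) ?_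
  calc #(Iio (⟨k, hk⟩ : Fin n)) * (#(Iio (⟨k, hk⟩ : Fin n)) - 1)
        + ∑ i ∈ (Iio ⟨k, hk⟩)ᶜ, min (extremalSeq n k a b e i) #(Iio (⟨k, hk⟩ : Fin n))
      ≤ k * (k - 1) + ∑ i ∈ (Iio ⟨k, hk⟩)ᶜ, extremalSeq n k a b e i := by
        rw [Fin.card_Iio]
        gcongr with i
        exact min_le_left _ _
    _ < ∑ i ∈ Iio ⟨k, hk⟩, extremalSeq n k a b e i := by
        rwa [sum_extremalSeq_Iio, sum_extremalSeq_compl_Iio]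

end extremalSeq

theorem Nat.sq_div_four (s : ℕ) : s ^ 2 / 4 = s / 2 * (s - s / 2) := by
  rcases Nat.even_or_odd' s with ⟨m, rfl | rfl⟩
  · rw [show 2 * m / 2 = m by omega, show 2 * m - m = m by omega,
      show (2 * m) ^ 2 = 4 * (m * m) by ring]
    omega
  · rw [show (2 * m + 1) / 2 = m by omega, show 2 * m + 1 - m = m + 1 by omega,
      show (2 * m + 1) ^ 2 = 4 * (m * (m + 1)) + 1 by ring]
    omega

theorem even_div_two_mul_add_mul {a b : ℕ} (c : ℕ) (hb : Even b) (hab : (a + b) % 4 ≠ 1) :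
    Even ((a + b + 1) / 2 * a + c * b) := by
  refine Even.add (Nat.even_mul.2 ?_) (hb.mul_left c)
  rw [Nat.even_iff, Nat.even_iff]
  have := Nat.even_iff.1 hb
  omega

theorem add_lt_sq_div_four_of_not_zzCond {a b n e : ℕ} (h : ¬ ZZCond a b n) (he : e ≤ 1)
    (he' : e = 1 → Odd b ∨ (a + b) % 4 = 1) : n * b + e < (a + b + 1) ^ 2 / 4 := by
  unfold ZZCond at h
  split_ifs at h with hc
  · omega
  · have : e ≠ 1 := fun h1 => hc (he' h1)
    omega

/-- Sharpness: for any triple `(a, b, n)` of positive integers with `b < a < n` that fails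
the refined Zverovich–Zverovich bound, there is a nongraphic decreasing sequence of
positive integers of length `n` with even sum, maximal element `a` and minimal element `b`. -/
theorem sharpness (a b n : ℕ) (hb : 0 < b) (hba : b < a) (han : a < n)
    (hfail : ¬ ZZCond a b n) :
    ∃ d : Fin n → ℕ, Antitone d ∧ (∀ i, 0 < d i) ∧ Even (∑ i, d i) ∧
      d ⟨0, by omega⟩ = a ∧ d ⟨n - 1, by omega⟩ = b ∧ ¬ IsGraphic d := by
  obtain ⟨k, hk⟩ : ∃ k, k = (a + b + 1) / 2 := ⟨_, rfl⟩
  obtain ⟨e, he⟩ : ∃ e, e = (k * a + (n - k) * b) % 2 := ⟨_, rfl⟩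
  have hviol : n * b + e < k * (a + b + 1 - k) := by
    rw [hk, ← Nat.sq_div_four]
    refine add_lt_sq_div_four_of_not_zzCond hfail (by omega) fun he1 => ?_
    by_contra hc
    rw [not_or, Nat.not_odd_iff_even] at hc
    have := Nat.even_iff.1 (even_div_two_mul_add_mul (n - k) hc.1 hc.2)
    rw [← hk] at this
    omega
  have hkn : k + e < n := by
    by_contra hkn
    obtain ⟨rfl, rfl, rfl, rfl⟩ : n = k + 1 ∧ a = k ∧ k = b + 1 ∧ e = 1 := by omega
    rw [show b + 1 + b + 1 - (b + 1) = b + 1 by omega] at hviol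
    nlinarith
  refine ⟨extremalSeq n k a b e, extremalSeq_antitone (by omega), fun i => ?_, ?_, ?_, ?_,
    not_isGraphic_extremalSeq (by omega) ?_⟩
  · unfold extremalSeq; split_ifs <;> omega
  · rw [← sum_add_sum_compl (Iio ⟨k, by omega⟩), sum_extremalSeq_Iio, sum_extremalSeq_compl_Iio,
      Nat.even_iff]
    omega
  · simp [extremalSeq, show 0 < k by omega]
  · simp only [extremalSeq]
    split_ifs <;> omega
  · zify [show 1 ≤ k by omega, show k ≤ n by omega, show k ≤ a + b + 1 by omega] at hviol ⊢
    linarith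
end

section
/- Let a, b, n, s be natural numbers with b < a < n and 0 < s < n, and suppose that a·s + b·(n − s) is even. Then the sequence (a^s, b^{n−s}) consisting of s copies of a followed by n − s copies of b is graphic if and only if s² − (1 + a + b)·s + n·b ≥ 0. -/
/-!
Necessity is the Erdős–Gallai inequality for the `s` vertices of degree `a`: their degrees add up
to at most `s (s - 1)` plus the number of edges leaving them, which is at most `(n - s) b`.

For sufficiency, the graph is assembled from a graph on the `a`-part, a graph on the `b`-part and
`x` cross edges. Joining, for `k < x`, vertex `⌊k s / x⌋` of the `a`-part to vertex `k mod (n - s)`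
of the `b`-part gives a simple bipartite graph whose degrees on either side differ by at most one.
The degrees left over inside each part then also differ by at most one, and such a sequence is
graphic as soon as its sum is even and its entries are smaller than the number of vertices
(Havel–Hakimi: join a vertex of maximum degree to vertices of largest degree). The inequality and
the parity hypothesis leave room for a suitable `x`.
-/

open Finset

def IsRealizable {V : Type*} (d : V → ℕ) : Prop :=
  ∃ G : SimpleGraph V, ∀ v, (G.neighborSet v).ncard = d v

theorem IsRealizable.comp_equiv {V W : Type*} {d : V → ℕ} (h : IsRealizable d) (e : W ≃ V) :
    IsRealizable (d ∘ e) := by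
  obtain ⟨G, hG⟩ := h
  refine ⟨G.comap e, fun w => ?_⟩
  change (e ⁻¹' G.neighborSet (e w)).ncard = d (e w)
  rw [Set.ncard_preimage_of_injective_subset_range e.injective (by simp), hG]

theorem SimpleGraph.sum_degree_le {V : Type*} [Fintype V] [DecidableEq V] (G : SimpleGraph V)
    [DecidableRel G.Adj] (S : Finset V) :
    ∑ u ∈ S, G.degree u ≤ #S * (#S - 1) + ∑ v ∈ Sᶜ, G.degree v := by
  have hsplit : ∀ u, G.degree u = #{v ∈ S | G.Adj u v} + #{v ∈ Sᶜ | G.Adj u v} := by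
    intro u
    rw [← card_neighborFinset_eq_degree, neighborFinset_eq_filter, ← card_union_of_disjoint
      (disjoint_filter_filter disjoint_compl_right), ← filter_union, union_compl]
  have hinside : ∑ u ∈ S, #{v ∈ S | G.Adj u v} ≤ #S * (#S - 1) := by
    rw [← smul_eq_mul]
    refine sum_le_card_nsmul S _ (#S - 1) fun u hu => ?_
    rw [← card_erase_of_mem hu]
    exact card_le_card fun v hv => by
      rw [mem_filter] at hv
      exact mem_erase.mpr ⟨(G.ne_of_adj hv.2).symm, hv.1⟩
  have hcross : ∑ u ∈ S, #{v ∈ Sᶜ | G.Adj u v} ≤ ∑ v ∈ Sᶜ, G.degree v :=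
    calc ∑ u ∈ S, #{v ∈ Sᶜ | G.Adj u v}
        = ∑ v ∈ Sᶜ, #{u ∈ S | G.Adj u v} := sum_card_bipartiteAbove_eq_sum_card_bipartiteBelow _
      _ ≤ ∑ v ∈ Sᶜ, G.degree v := sum_le_sum fun v _ => by
        rw [← card_neighborFinset_eq_degree]
        exact card_le_card fun u hu => (mem_neighborFinset G v u).mpr (mem_filter.mp hu).2.symm
  rw [sum_congr rfl fun u _ => hsplit u, sum_add_distrib]
  omega

theorem mul_add_one_le_of_isGraphic {a b n s : ℕ} (hsn : s ≤ n)
    (h : IsGraphic fun i : Fin n => if (i : ℕ) < s then a else b) :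
    s * (a + 1) ≤ (n - s) * b + s * s := by
  classical
  obtain ⟨G, hG⟩ := h
  have hdeg : ∀ v, G.degree v = if (v : ℕ) < s then a else b := fun v => by
    rw [← G.card_neighborFinset_eq_degree, ← Set.ncard_coe_finset, G.coe_neighborFinset]
    exact hG v
  set S : Finset (Fin n) := {i | (i : ℕ) < s}
  have hS : #S = s := by simp [S, Fin.card_filter_val_lt, hsn]
  have hin : ∑ v ∈ S, G.degree v = s * a := by
    rw [sum_congr rfl fun v hv => by rw [hdeg, if_pos (mem_filter.mp hv).2], sum_const, hS,
      smul_eq_mul]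
  have hout : ∑ v ∈ Sᶜ, G.degree v = (n - s) * b := by
    rw [sum_congr rfl fun v hv => by rw [hdeg, if_neg (by simpa [S] using hv)], sum_const,
      card_compl, hS, Fintype.card_fin, smul_eq_mul]
  have := G.sum_degree_le S
  rw [hin, hout, hS] at this
  rcases Nat.eq_zero_or_pos s with rfl | hs
  · simp
  · have := Nat.mul_sub_one s s
    have := Nat.le_mul_self s
    rw [mul_add_one]
    omega

namespace SimpleGraph

variable {α β : Type*}

def extendOption (G : SimpleGraph α) (B : Set α) : SimpleGraph (Option α) where
  Adj
    | some u, some v => G.Adj u v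
    | none, some v => v ∈ B
    | some u, none => u ∈ B
    | none, none => False
  symm := ⟨by
    rintro (_ | u) (_ | v) h
    exacts [h, h, h, h.symm]⟩
  loopless := ⟨by
    rintro (_ | u) h
    exacts [h, G.irrefl h]⟩

theorem neighborSet_extendOption_none (G : SimpleGraph α) (B : Set α) :
    (G.extendOption B).neighborSet none = some '' B := by
  ext (_ | v) <;> simp [extendOption]

theorem neighborSet_extendOption_some_of_mem (G : SimpleGraph α) {B : Set α} {u : α}
    (hu : u ∈ B) :
    (G.extendOption B).neighborSet (some u) = insert none (some '' G.neighborSet u) := by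
  ext (_ | v) <;> simp [extendOption, hu]

theorem neighborSet_extendOption_some_of_notMem (G : SimpleGraph α) {B : Set α} {u : α}
    (hu : u ∉ B) : (G.extendOption B).neighborSet (some u) = some '' G.neighborSet u := by
  ext (_ | v) <;> simp [extendOption, hu]

def sumWith (G : SimpleGraph α) (H : SimpleGraph β) (R : α → β → Prop) :
    SimpleGraph (α ⊕ β) where
  Adj
    | .inl a, .inl a' => G.Adj a a'
    | .inr b, .inr b' => H.Adj b b'
    | .inl a, .inr b => R a b
    | .inr b, .inl a => R a b
  symm := ⟨by
    rintro (a | b) (a' | b') h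
    exacts [h.symm, h, h, h.symm]⟩
  loopless := ⟨by
    rintro (a | b) h
    exacts [G.irrefl h, H.irrefl h]⟩

theorem neighborSet_sumWith_inl (G : SimpleGraph α) (H : SimpleGraph β) (R : α → β → Prop)
    (a : α) :
    (G.sumWith H R).neighborSet (.inl a) = .inl '' G.neighborSet a ∪ .inr '' {b | R a b} := by
  ext (a' | b) <;> simp [sumWith]

theorem neighborSet_sumWith_inr (G : SimpleGraph α) (H : SimpleGraph β) (R : α → β → Prop)
    (b : β) :
    (G.sumWith H R).neighborSet (.inr b) = .inr '' H.neighborSet b ∪ .inl '' {a | R a b} := by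
  ext (a | b') <;> simp [sumWith]

end SimpleGraph

namespace IsRealizable

theorem extendOption {α : Type*} [Finite α] [DecidableEq α] {d' : α → ℕ}
    (h : IsRealizable d') (B : Finset α) {d : Option α → ℕ} (hnone : d none = #B)
    (hsome : ∀ u, d (some u) = d' u + if u ∈ B then 1 else 0) : IsRealizable d := by
  obtain ⟨G, hG⟩ := h
  refine ⟨G.extendOption B, fun v => ?_⟩
  cases v with
  | none =>
    rw [G.neighborSet_extendOption_none, Set.ncard_image_of_injective _ (Option.some_injective α),
      Set.ncard_coe_finset, hnone]
  | some u =>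
    rw [hsome, ← hG, ← Set.ncard_image_of_injective _ (Option.some_injective α)]
    by_cases hu : u ∈ B
    · rw [G.neighborSet_extendOption_some_of_mem hu, if_pos hu]
      exact Set.ncard_insert_of_notMem (by simp) (Set.toFinite _)
    · rw [G.neighborSet_extendOption_some_of_notMem hu, if_neg hu, add_zero]

theorem sumWith {α β : Type*} [Finite α] [Finite β] {d₁ : α → ℕ} {d₂ : β → ℕ}
    (h₁ : IsRealizable d₁) (h₂ : IsRealizable d₂) (R : α → β → Prop) :
    IsRealizable
      (Sum.elim (fun a => d₁ a + {b | R a b}.ncard) (fun b => d₂ b + {a | R a b}.ncard)) := by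
  obtain ⟨G, hG⟩ := h₁
  obtain ⟨H, hH⟩ := h₂
  refine ⟨G.sumWith H R, ?_⟩
  rintro (a | b)
  · rw [G.neighborSet_sumWith_inl, Set.ncard_union_eq Set.disjoint_image_inl_image_inr,
      Set.ncard_image_of_injective _ Sum.inl_injective,
      Set.ncard_image_of_injective _ Sum.inr_injective, hG, Sum.elim_inl]
  · rw [G.neighborSet_sumWith_inr, Set.ncard_union_eq Set.disjoint_image_inl_image_inr.symm,
      Set.ncard_image_of_injective _ Sum.inr_injective,
      Set.ncard_image_of_injective _ Sum.inl_injective, hH, Sum.elim_inr]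

end IsRealizable

theorem exists_finset_card_eq_forall_le {α β : Type*} [Fintype α] [DecidableEq α]
    [LinearOrder β] (f : α → β) {k : ℕ} (hk : k ≤ Fintype.card α) :
    ∃ B : Finset α, #B = k ∧ ∀ i ∈ B, ∀ j ∉ B, f j ≤ f i := by
  induction k with
  | zero => exact ⟨∅, rfl, by simp⟩
  | succ k ih =>
    obtain ⟨B, hcard, hB⟩ := ih (by omega)
    have hne : Bᶜ.Nonempty := by
      rw [← card_pos, card_compl]
      omega
    obtain ⟨j₀, hj₀, hmax⟩ := exists_max_image Bᶜ f hne
    rw [mem_compl] at hj₀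
    refine ⟨insert j₀ B, by rw [card_insert_of_notMem hj₀, hcard], fun i hi j hj => ?_⟩
    rw [mem_insert, not_or] at hj
    rcases mem_insert.mp hi with rfl | hi
    · exact hmax j (mem_compl.mpr hj.2)
    · exact hB i hi j hj.2

section HavelHakimi

variable {α : Type*} [Fintype α] {d : Option α → ℕ} {B : Finset α}

theorem one_le_of_mem_of_even_sum (hd : ∀ u v, d u ≤ d v + 1) (hB : #B = d none)
    (hup : ∀ i ∈ B, ∀ j ∉ B, d (some j) ≤ d (some i)) (heven : Even (∑ v, d v)) {u : α}
    (hu : u ∈ B) : 1 ≤ d (some u) := by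
  classical
  by_contra! h₀
  -- otherwise `d` is `1` at `none` and `0` elsewhere
  have hBu : B = {u} := by
    refine eq_singleton_iff_unique_mem.mpr ⟨hu, fun j hj => ?_⟩
    by_contra hju
    have hpair := card_le_card (insert_subset hu (singleton_subset_iff.mpr hj))
    rw [card_pair (Ne.symm hju)] at hpair
    have := hd none (some u)
    omega
  have hzero : ∀ j, d (some j) = 0 := by
    intro j
    by_cases hj : j ∈ B
    · rw [hBu, mem_singleton] at hj
      rw [hj]
      omega
    · have := hup u hu j hj
      omega
  rw [Fintype.sum_option, ← hB, hBu, card_singleton, sum_eq_zero fun j _ => hzero j] at heven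
  exact Nat.not_even_one heven

theorem isRealizable_option_of_forall_le_none
    (ih : ∀ d' : α → ℕ, (∀ u v, d' u ≤ d' v + 1) → (∀ v, d' v < Fintype.card α) →
      Even (∑ v, d' v) → IsRealizable d')
    (hmax : ∀ v, d v ≤ d none) (hd : ∀ u v, d u ≤ d v + 1)
    (hlt : ∀ v, d v < Fintype.card (Option α)) (heven : Even (∑ v, d v)) : IsRealizable d := by
  classical
  rw [Fintype.card_option] at hlt
  obtain ⟨B, hB, hup⟩ :=
    exists_finset_card_eq_forall_le (d ∘ some) (Nat.lt_succ_iff.mp (hlt none))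
  simp only [Function.comp_apply] at hup
  set d' : α → ℕ := fun u => d (some u) - if u ∈ B then 1 else 0 with hd'
  have hsome : ∀ u, d (some u) = d' u + if u ∈ B then 1 else 0 := by
    intro u
    by_cases hu : u ∈ B
    · simp only [hd', if_pos hu]
      have := one_le_of_mem_of_even_sum hd hB hup heven hu
      omega
    · simp [hd', hu]
  refine (ih d' (fun u v => ?_) (fun u => ?_) ?_).extendOption B hB.symm hsome
  · have h₁ := hsome u
    have h₂ := hsome v
    have h₃ := hd (some u) (some v)
    by_cases hu : u ∈ B <;> by_cases hv : v ∈ B <;>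
      simp only [hu, hv, if_true, if_false] at h₁ h₂
    · omega
    · omega
    · have := hup v hv u hu
      omega
    · omega
  · have h₁ := hsome u
    have h₂ := hmax (some u)
    have h₃ := hlt none
    by_cases hu : u ∈ B
    · rw [if_pos hu] at h₁
      omega
    · rw [if_neg hu] at h₁
      refine lt_of_le_of_ne (by omega) fun h => hu ?_
      rw [eq_univ_of_card B (by omega)]
      exact mem_univ u
  · have hsplit : ∑ u, d (some u) = ∑ u, d' u + #B := by
      rw [sum_congr rfl fun u _ => hsome u, sum_add_distrib, sum_boole, Nat.cast_id,
        filter_mem_eq_inter, univ_inter]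
    rw [Fintype.sum_option, hsplit, ← hB,
      show #B + (∑ u, d' u + #B) = ∑ u, d' u + 2 * #B by ring] at heven
    exact (Nat.even_add.mp heven).mpr (even_two_mul _)

end HavelHakimi

theorem isRealizable_of_forall_le_add_one {V : Type*} [Fintype V] {d : V → ℕ}
    (hd : ∀ u v, d u ≤ d v + 1) (hlt : ∀ v, d v < Fintype.card V) (heven : Even (∑ v, d v)) :
    IsRealizable d := by
  refine Fintype.induction_empty_option (P := fun V _ => ∀ d : V → ℕ, (∀ u v, d u ≤ d v + 1) →
    (∀ v, d v < Fintype.card V) → Even (∑ v, d v) → IsRealizable d) ?_ ?_ ?_ V d hd hlt heven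
  · intro α β _ e ih d hd hlt heven
    let _ : Fintype α := Fintype.ofEquiv β e.symm
    have h := ih (d ∘ e) (fun u v => hd _ _)
      (fun v => by simpa [Fintype.card_congr e] using hlt (e v))
      (by rwa [Function.comp_def, Equiv.sum_comp e d])
    simpa [Function.comp_def] using h.comp_equiv e.symm
  · exact fun d _ _ _ => ⟨⊥, fun v => v.elim⟩
  · intro α _ ih d hd hlt heven
    classical
    obtain ⟨v₀, hv₀⟩ := Finite.exists_max d
    let e := Equiv.swap none v₀
    have h := isRealizable_option_of_forall_le_none ih (d := d ∘ e)
      (fun v => by simpa [e] using hv₀ (e v)) (fun u v => hd _ _) (fun v => hlt _)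
      (by rwa [Function.comp_def, Equiv.sum_comp e d])
    simpa [Function.comp_def, e] using h.comp_equiv e.symm

/-- `c` splits `x` into `Fintype.card ι` parts, each less than one away from the average. -/
def IsEquitable {ι : Type*} [Fintype ι] (x : ℕ) (c : ι → ℕ) : Prop :=
  ∑ i, c i = x ∧ ∀ i, c i * Fintype.card ι < x + Fintype.card ι ∧
    x < c i * Fintype.card ι + Fintype.card ι

namespace IsEquitable

variable {ι : Type*} [Fintype ι] {x : ℕ} {c : ι → ℕ}

theorem of_card_filter {f : ℕ → ι} [DecidableEq ι]
    (hf : ∀ i, #{k ∈ range x | f k = i} * Fintype.card ι < x + Fintype.card ι ∧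
      x < #{k ∈ range x | f k = i} * Fintype.card ι + Fintype.card ι) :
    IsEquitable x fun i => #{k ∈ range x | f k = i} :=
  ⟨by rw [← card_eq_sum_card_fiberwise fun k _ => mem_coe.mpr (mem_univ (f k)), card_range], hf⟩

theorem le_add_one (hc : IsEquitable x c) (i j : ι) : c i ≤ c j + 1 := by
  have hi := (hc.2 i).1
  have hj := (hc.2 j).2
  have : c i * Fintype.card ι < (c j + 2) * Fintype.card ι := by rw [add_mul]; omega
  exact Nat.le_of_lt_succ (Nat.lt_of_mul_lt_mul_right this)

theorem le_of_le_mul (hc : IsEquitable x c) {a : ℕ} (hxa : x ≤ Fintype.card ι * a) (i : ι) :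
    c i ≤ a := by
  have hi := (hc.2 i).1
  have : c i * Fintype.card ι < (a + 1) * Fintype.card ι := by
    rw [add_one_mul, mul_comm a]
    omega
  exact Nat.le_of_lt_succ (Nat.lt_of_mul_lt_mul_right this)

theorem isRealizable_sub {a : ℕ} (hc : IsEquitable x c) (hxa : x ≤ Fintype.card ι * a)
    (hax : Fintype.card ι * (a + 1) ≤ x + Fintype.card ι * Fintype.card ι)
    (heven : Even (Fintype.card ι * a + x)) : IsRealizable fun i => a - c i := by
  have hle := hc.le_of_le_mul hxa
  refine isRealizable_of_forall_le_add_one (fun u v => ?_) (fun u => ?_) ?_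
  · have := hc.le_add_one v u
    have := hle u
    omega
  · have hu := (hc.2 u).2
    suffices a < c u + Fintype.card ι by have := Fintype.card_pos_iff.mpr ⟨u⟩; omega
    by_contra! h
    have := Nat.mul_le_mul_left (Fintype.card ι) (Nat.succ_le_succ h)
    nlinarith
  · have hsum : ∑ i, (a - c i) + x = Fintype.card ι * a := by
      rw [← hc.1, ← sum_add_distrib, sum_congr rfl fun i _ => Nat.sub_add_cancel (hle i),
        sum_const, card_univ, smul_eq_mul]
    rw [← hsum, add_assoc, ← two_mul] at heven
    exact (Nat.even_add.mp heven).mpr (even_two_mul x)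

end IsEquitable

theorem isEquitable_card_filter_ofNat_eq (m : ℕ) [NeZero m] (x : ℕ) :
    IsEquitable x fun j : Fin m => #{k ∈ range x | Fin.ofNat m k = j} := by
  have hm : 0 < m := NeZero.pos m
  refine IsEquitable.of_card_filter fun j => ?_
  have hcount : #{k ∈ range x | Fin.ofNat m k = j} = x / m + if j % m < x % m then 1 else 0 := by
    rw [← Nat.count_modEq_card x hm, Nat.count_eq_card_filter_range]
    congr 1
    ext k
    simp [Fin.ext_iff, Nat.ModEq, Nat.mod_eq_of_lt j.isLt]
  rw [Fintype.card_fin, hcount, Nat.mod_eq_of_lt j.isLt]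
  have := Nat.div_add_mod' x m
  have := Nat.mod_lt x hm
  split_ifs <;> simp only [add_mul, one_mul, add_zero] <;> omega

theorem Nat.mul_ceilDiv_lt {s : ℕ} (hs : 0 < s) (y : ℕ) : s * (y ⌈/⌉ s) < y + s := by
  rw [Nat.ceilDiv_eq_add_pred_div, mul_comm]
  have := Nat.div_mul_le_self (y + s - 1) s
  omega

theorem isEquitable_card_filter_ofNat_mul_div_eq (s : ℕ) [NeZero s] (x : ℕ) :
    IsEquitable x fun i : Fin s => #{k ∈ range x | Fin.ofNat s (k * s / x) = i} := by
  have hs : 0 < s := NeZero.pos s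
  refine IsEquitable.of_card_filter fun i => ?_
  rw [Fintype.card_fin]
  rcases Nat.eq_zero_or_pos x with rfl | hx
  · simp [hs]
  have hfilter :
      {k ∈ range x | Fin.ofNat s (k * s / x) = i} = Ico (i * x ⌈/⌉ s) ((i * x + x) ⌈/⌉ s) := by
    ext k
    simp only [mem_filter, mem_range, mem_Ico, ← not_le (b := k), ceilDiv_le_iff_le_mul hs]
    rw [mul_comm s k, Fin.ext_iff, Fin.val_ofNat]
    have hix : (i : ℕ) * x + x ≤ s * x := by
      simpa [add_one_mul] using Nat.mul_le_mul_right x i.isLt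
    constructor
    · rintro ⟨hk, hki⟩
      have hlt : k * s / x < s := (Nat.div_lt_iff_lt_mul hx).mpr (by nlinarith)
      rw [Nat.mod_eq_of_lt hlt, Nat.div_eq_iff hx] at hki
      omega
    · rintro ⟨h₁, h₂⟩
      have hk : k < x := by nlinarith
      have hdiv : k * s / x = i := (Nat.div_eq_iff hx).mpr (by omega)
      rw [hdiv, Nat.mod_eq_of_lt i.isLt]
      exact ⟨by omega, rfl⟩
  rw [hfilter, Nat.card_Ico]
  have h₁ := le_smul_ceilDiv (b := (i : ℕ) * x) hs
  have h₂ := le_smul_ceilDiv (b := (i : ℕ) * x + x) hs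
  have h₃ := Nat.mul_ceilDiv_lt hs (i * x)
  have h₄ := Nat.mul_ceilDiv_lt hs (i * x + x)
  simp only [smul_eq_mul] at h₁ h₂
  rw [mul_comm, Nat.mul_sub]
  omega

theorem eq_of_mul_div_eq_of_mod_eq {s m x k k' : ℕ} (hx : x ≤ s * m) (hk : k < x)
    (hdiv : k * s / x = k' * s / x) (hmod : k % m = k' % m) : k = k' := by
  have hx₀ : 0 < x := by omega
  have h₁ := Nat.div_mul_le_self (k * s) x
  have h₂ := Nat.lt_div_mul_add (a := k * s) hx₀
  have h₃ := Nat.div_mul_le_self (k' * s) x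
  have h₄ := Nat.lt_div_mul_add (a := k' * s) hx₀
  rw [hdiv] at h₁ h₂
  have hlt₁ : k < k' + m := Nat.lt_of_mul_lt_mul_right (a := s) (by nlinarith)
  have hlt₂ : k' < k + m := Nat.lt_of_mul_lt_mul_right (a := s) (by nlinarith)
  exact Nat.ModEq.eq_of_abs_lt hmod (abs_sub_lt_iff.mpr ⟨by omega, by omega⟩)

theorem ncard_setOf_exists_eq_card_filter {α β : Type*} [DecidableEq α] {x : ℕ}
    {p : ℕ → α} {q : ℕ → β} (hinj : ∀ k < x, ∀ k' < x, p k = p k' → q k = q k' → k = k')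
    (a : α) : {b | ∃ k < x, p k = a ∧ q k = b}.ncard = #{k ∈ range x | p k = a} := by
  have himage : {b | ∃ k < x, p k = a ∧ q k = b} = q '' ↑{k ∈ range x | p k = a} := by
    ext b
    simp [and_assoc]
  rw [himage, Set.InjOn.ncard_image, Set.ncard_coe_finset]
  intro k hk k' hk' hq
  simp only [coe_filter, mem_range] at hk hk'
  exact hinj k hk.1 k' hk'.1 (hk.2.trans hk'.2.symm) hq

theorem exists_rel_isEquitable {s m x : ℕ} [NeZero s] [NeZero m] (hx : x ≤ s * m) :
    ∃ R : Fin s → Fin m → Prop,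
      IsEquitable x (fun i => {j | R i j}.ncard) ∧ IsEquitable x (fun j => {i | R i j}.ncard) := by
  set p : ℕ → Fin s := fun k => Fin.ofNat s (k * s / x)
  set q : ℕ → Fin m := fun k => Fin.ofNat m k
  have hinj : ∀ k < x, ∀ k' < x, p k = p k' → q k = q k' → k = k' := by
    intro k hk k' hk' hp hq
    have hlt : ∀ l < x, l * s / x < s := fun l hl =>
      (Nat.div_lt_iff_lt_mul (by omega)).mpr
        (by rw [mul_comm s]; exact Nat.mul_lt_mul_of_pos_right hl (NeZero.pos s))
    simp only [p, q, Fin.ext_iff, Fin.val_ofNat, Nat.mod_eq_of_lt (hlt k hk),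
      Nat.mod_eq_of_lt (hlt k' hk')] at hp hq
    exact eq_of_mul_div_eq_of_mod_eq hx hk hp hq
  refine ⟨fun i j => ∃ k < x, p k = i ∧ q k = j, ?_, ?_⟩
  · simp_rw [ncard_setOf_exists_eq_card_filter hinj]
    exact isEquitable_card_filter_ofNat_mul_div_eq s x
  · have hswap : ∀ j, {i | ∃ k < x, p k = i ∧ q k = j} = {i | ∃ k < x, q k = j ∧ p k = i} := by
      simp only [and_comm, implies_true]
    simp_rw [hswap,
      ncard_setOf_exists_eq_card_filter fun k hk k' hk' hq hp => hinj k hk k' hk' hp hq]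
    exact isEquitable_card_filter_ofNat_eq m x

theorem exists_crossing_number {a b s m : ℕ} (hs : 0 < s) (hm : 0 < m) (hba : b < a)
    (han : a < s + m) (heven : Even (s * a + m * b)) (hEG : s * (a + 1) ≤ m * b + s * s) :
    ∃ x, x ≤ s * a ∧ s * (a + 1) ≤ x + s * s ∧ x ≤ m * b ∧ m * (b + 1) ≤ x + m * m ∧
      x ≤ s * m ∧ Even (s * a + x) := by
  have hsa : s * (a + 1) = s * a + s := mul_add_one s a
  have hmb : m * (b + 1) = m * b + m := mul_add_one m b
  have hs₂ : s ≤ s * s := Nat.le_mul_self s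
  have hm₂ : m ≤ m * m := Nat.le_mul_self m
  have hsm : s * a + s ≤ s * s + s * m := by
    rw [← hsa, ← mul_add]
    exact Nat.mul_le_mul_left s han
  have hms : m * b + m < s * m + m * m := by
    rw [← hmb, mul_comm s m, ← mul_add]
    exact Nat.mul_lt_mul_of_pos_left (by omega) hm
  have hma : m * b + m ≤ s * a + m * m := by
    have := Nat.mul_le_mul_left m hba
    rcases le_or_gt m s with h | h
    · nlinarith [Nat.mul_le_mul_right a h]
    · nlinarith
  have hss := Nat.even_mul_succ_self s
  have hP : 0 < s * m := Nat.mul_pos hs hm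
  rw [mul_add_one] at hss
  rw [hsa] at hEG
  simp only [Nat.even_iff, hsa, hmb] at heven hss ⊢
  generalize s * a = A, m * b = B, s * s = S, m * m = M, s * m = P at *
  -- the least admissible value, raised by one if its parity is wrong
  by_cases hL : (A + max (A + s - S) (B + m - M)) % 2 = 0
  · exact ⟨max (A + s - S) (B + m - M), by omega⟩
  · exact ⟨max (A + s - S) (B + m - M) + 1, by omega⟩

theorem isGraphic_of_mul_add_one_le {a b n s : ℕ} (hba : b < a) (han : a < n) (hs : 0 < s)
    (hsn : s < n) (heven : Even (a * s + b * (n - s))) (h : s * (a + 1) ≤ (n - s) * b + s * s) :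
    IsGraphic fun i : Fin n => if (i : ℕ) < s then a else b := by
  have hm : 0 < n - s := by omega
  have _ : NeZero s := ⟨hs.ne'⟩
  have _ : NeZero (n - s) := ⟨hm.ne'⟩
  have heven' : Even (s * a + (n - s) * b) := by rwa [mul_comm s, mul_comm (n - s)]
  obtain ⟨x, hxa, hax, hxb, hbx, hxsm, hxeven⟩ :=
    exists_crossing_number hs hm hba (by omega) heven' h
  have hyeven : Even ((n - s) * b + x) :=
    Nat.even_add.mpr ((Nat.even_add.mp heven').symm.trans (Nat.even_add.mp hxeven))
  obtain ⟨R, hS, hT⟩ := exists_rel_isEquitable hxsm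
  rw [← Fintype.card_fin s] at hxa hax hxeven
  rw [← Fintype.card_fin (n - s)] at hxb hbx hyeven
  have hR := (hS.isRealizable_sub hxa hax hxeven).sumWith (hT.isRealizable_sub hxb hbx hyeven) R
  let e : Fin n ≃ Fin s ⊕ Fin (n - s) := (finCongr (by omega)).trans finSumFinEquiv.symm
  show IsRealizable _
  convert hR.comp_equiv e using 2 with i
  obtain ⟨y, rfl⟩ := e.symm.surjective i
  rcases y with j | j
  · simp [e, Nat.sub_add_cancel (hS.le_of_le_mul hxa j)]
  · simp [e, Nat.sub_add_cancel (hT.le_of_le_mul hxb j)]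

/-- For natural numbers `b < a < n`, `0 < s < n` with `a·s + b·(n - s)` even, the sequence
`(a^s, b^{n-s})` is graphic if and only if `s² - (1 + a + b)·s + n·b ≥ 0`. -/
theorem two_element_graphic_iff (a b n s : ℕ) (hba : b < a) (han : a < n)
    (hs : 0 < s) (hsn : s < n) (heven : Even (a * s + b * (n - s))) :
    IsGraphic (fun i : Fin n => if (i : ℕ) < s then a else b) ↔
      0 ≤ (s : ℤ) ^ 2 - (1 + a + b) * s + n * b := by
  have key : IsGraphic (fun i : Fin n => if (i : ℕ) < s then a else b) ↔
      s * (a + 1) ≤ (n - s) * b + s * s :=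
    ⟨mul_add_one_le_of_isGraphic hsn.le, isGraphic_of_mul_add_one_le hba han hs hsn heven⟩
  rw [key]
  zify [hsn.le]
  constructor <;> intro h <;> nlinarith
end

section
/- Let a, b, n, s be natural numbers with b < a < n and 0 < s < n, and let d = (a^s, b^{n−s}). Then d satisfies the Erdős–Gallai inequality Σ_{i=1}^k d_i ≤ k(k − 1) + Σ_{i=k+1}^n min{k, d_i} for every k ∈ {1, ..., n} if and only if both: (1) s² − (1 + a + b)·s + n·b ≥ 0, and (2) k² − k·(1 + 2b) + n·b + b·s − a·s ≥ 0 for every integer k with k > s and k > b and k ≤ n. -/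
/-- For `b < a < n` and `0 < s < n`, the sequence `d = (a^s, b^{n-s})` satisfies the
Erdős–Gallai inequalities `Σ_{i=1}^k d_i ≤ k(k-1) + Σ_{i=k+1}^n min(k, d_i)` for every
`k ∈ {1, ..., n}` if and only if `s² - (1+a+b)s + nb ≥ 0` and
`k² - k(1+2b) + nb + bs - as ≥ 0` for every integer `k` with `k > s`, `k > b`, `k ≤ n`. -/
theorem erdos_gallai_two_element (a b n s : ℕ) (hba : b < a) (han : a < n)
    (hs : 0 < s) (hsn : s < n) :
    (∀ k, 1 ≤ k → k ≤ n →
        ∑ i ∈ Finset.univ.filter (fun i : Fin n => (i : ℕ) < k),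
            (if (i : ℕ) < s then a else b) ≤
          k * (k - 1) + ∑ i ∈ Finset.univ.filter (fun i : Fin n => k ≤ (i : ℕ)),
            min k (if (i : ℕ) < s then a else b)) ↔
      (0 ≤ (s : ℤ) ^ 2 - (1 + a + b) * s + n * b ∧
        ∀ k : ℕ, s < k → b < k → k ≤ n →
          0 ≤ (k : ℤ) ^ 2 - k * (1 + 2 * b) + n * b + b * s - a * s) := by
  have h1 : ∀ k : ℕ, k ≤ n →
      ∑ i ∈ Finset.univ.filter (fun i : Fin n => (i : ℕ) < k),
        (if (i : ℕ) < s then a else b) = a * min k s + b * (k - min k s) := by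
    intro k hk
    rw [Finset.sum_filter, Fin.sum_univ_eq_sum_range
      (fun j => if j < k then (if j < s then a else b) else 0) n, ← Finset.sum_filter]
    have e : (Finset.range n).filter (fun i => i < k) = Finset.range k := by
      ext i; simp only [Finset.mem_filter, Finset.mem_range]; omega
    rw [e, Finset.sum_ite]
    have e1 : (Finset.range k).filter (fun i => i < s) = Finset.range (min k s) := by
      ext i; simp only [Finset.mem_filter, Finset.mem_range]; omega
    have e2 : (Finset.range k).filter (fun i => ¬ i < s) = Finset.Ico (min k s) k := by
      ext i; simp only [Finset.mem_filter, Finset.mem_range, Finset.mem_Ico, not_lt]; omega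
    rw [e1, e2, Finset.sum_const, Finset.sum_const, Nat.card_Ico, Finset.card_range,
      smul_eq_mul, smul_eq_mul, mul_comm a, mul_comm b]
  have h2 : ∀ k : ℕ, k ≤ n →
      ∑ i ∈ Finset.univ.filter (fun i : Fin n => k ≤ (i : ℕ)),
        min k (if (i : ℕ) < s then a else b)
      = (s - k) * min k a + (n - max k s) * min k b := by
    intro k hk
    rw [Finset.sum_filter, Fin.sum_univ_eq_sum_range
      (fun j => if k ≤ j then min k (if j < s then a else b) else 0) n, ← Finset.sum_filter]
    have e : (Finset.range n).filter (fun i => k ≤ i) = Finset.Ico k n := by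
      ext i; simp only [Finset.mem_filter, Finset.mem_range, Finset.mem_Ico]; omega
    rw [e, ← Finset.sum_Ico_consecutive _ (le_max_left k s) (by omega : max k s ≤ n)]
    have e1 : ∑ i ∈ Finset.Ico k (max k s), min k (if i < s then a else b)
        = (s - k) * min k a := by
      rw [Finset.sum_congr rfl (fun i hi => ?_), Finset.sum_const, Nat.card_Ico,
        smul_eq_mul]
      · congr 1; omega
      · simp only [Finset.mem_Ico] at hi
        rw [if_pos (by omega)]
    have e2 : ∑ i ∈ Finset.Ico (max k s) n, min k (if i < s then a else b)
        = (n - max k s) * min k b := by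
      rw [Finset.sum_congr rfl (fun i hi => ?_), Finset.sum_const, Nat.card_Ico,
        smul_eq_mul]
      simp only [Finset.mem_Ico] at hi
      rw [if_neg (by omega)]
    rw [e1, e2]
  constructor
  · intro hEG
    have hP : ∀ k, 1 ≤ k → k ≤ n →
        a * min k s + b * (k - min k s) ≤
          k * (k - 1) + ((s - k) * min k a + (n - max k s) * min k b) := by
      intro k hk1 hk2
      have := hEG k hk1 hk2
      rwa [h1 k hk2, h2 k hk2] at this
    constructor
    · rcases le_or_gt s b with hsb | hbs
      · nlinarith [mul_nonneg (by omega : (0:ℤ) ≤ (b:ℤ) - s) (by omega : (0:ℤ) ≤ (n:ℤ) - s),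
          mul_nonneg (by omega : (0:ℤ) ≤ (n:ℤ) - 1 - a) (by omega : (0:ℤ) ≤ (s:ℤ))]
      · rcases lt_or_ge a s with has | hsa
        · nlinarith [mul_nonneg (by omega : (0:ℤ) ≤ (s:ℤ) - 1 - a) (by omega : (0:ℤ) ≤ (s:ℤ)),
            mul_nonneg (by omega : (0:ℤ) ≤ (n:ℤ) - s) (by omega : (0:ℤ) ≤ (b:ℤ))]
        · have hp := hP s hs hsn.le
          rw [show min s s = s from by omega, show s - s = 0 from by omega,
            show min s a = s from by omega, show max s s = s from by omega,
            show min s b = b from by omega] at hp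
          have hp' : (a:ℤ) * s ≤ s * (s - 1) + (n - s) * b := by
            have h1s : (1:ℤ) ≤ s := by exact_mod_cast hs
            have hns : (s:ℤ) ≤ n := by exact_mod_cast hsn.le
            zify [hs, hsn.le] at hp
            linarith
          nlinarith [hp']
    · intro k hsk hbk hkn
      have hp := hP k (by omega) hkn
      rw [show min k s = s from by omega, show s - k = 0 from by omega,
        show max k s = k from by omega, show min k b = b from by omega] at hp
      have hp' : (a:ℤ) * s + b * (k - s) ≤ k * (k - 1) + (n - k) * b := by
        zify [hsk.le, hkn, (by omega : 1 ≤ k)] at hp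
        linarith
      nlinarith [hp']
  · rintro ⟨hc1, hc2⟩ k hk1 hk2
    rw [h1 k hk2, h2 k hk2]
    rcases le_or_gt k s with hks | hks
    · rw [show min k s = k from by omega, show k - k = 0 from by omega,
        show max k s = s from by omega, Nat.mul_zero, Nat.add_zero]
      rcases le_or_gt k a with hka | hka
      · rw [show min k a = k from by omega]
        rcases le_or_gt k b with hkb | hkb
        · rw [show min k b = k from by omega]
          zify [hks, hsn.le, hk1]
          nlinarith [mul_nonneg (by omega : (0:ℤ) ≤ (n:ℤ) - 1 - a) (by omega : (0:ℤ) ≤ (k:ℤ))]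
        · rw [show min k b = b from by omega]
          zify [hks, hsn.le, hk1]
          rcases le_or_gt s (a + 1) with hsa | hsa
          · nlinarith [hc1, mul_nonneg (by omega : (0:ℤ) ≤ (s:ℤ) - k)
              (by omega : (0:ℤ) ≤ (a:ℤ) + 1 - s)]
          · nlinarith [mul_nonneg (by omega : (0:ℤ) ≤ (k:ℤ)) (by omega : (0:ℤ) ≤ (s:ℤ) - a - 1),
              mul_nonneg (by omega : (0:ℤ) ≤ (n:ℤ) - s) (by omega : (0:ℤ) ≤ (b:ℤ))]
      · rw [show min k a = a from by omega, show min k b = b from by omega]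
        zify [hks, hsn.le, hk1]
        nlinarith [mul_nonneg (by omega : (0:ℤ) ≤ (k:ℤ) - a - 1) (by omega : (0:ℤ) ≤ (k:ℤ) - a),
          mul_nonneg (by omega : (0:ℤ) ≤ (a:ℤ)) (by omega : (0:ℤ) ≤ (s:ℤ) - a - 1),
          mul_nonneg (by omega : (0:ℤ) ≤ (n:ℤ) - s) (by omega : (0:ℤ) ≤ (b:ℤ))]
    · rw [show min k s = s from by omega, show s - k = 0 from by omega,
        show max k s = k from by omega, Nat.zero_mul, Nat.zero_add]
      rcases le_or_gt k b with hkb | hkb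
      · rw [show min k b = k from by omega]
        zify [hks.le, hk2, hk1]
        nlinarith [mul_nonneg (by omega : (0:ℤ) ≤ (n:ℤ) - 1 - a) (by omega : (0:ℤ) ≤ (s:ℤ)),
          mul_nonneg (by omega : (0:ℤ) ≤ (n:ℤ) - 1 - b) (by omega : (0:ℤ) ≤ (k:ℤ) - s)]
      · rw [show min k b = b from by omega]
        have := hc2 k hks hkb hk2
        zify [hks.le, hk2, hk1]
        nlinarith [this]
end

section
/- Let a, b, n, s be natural numbers with b < a < n and 0 < s < n. Then s² − (1 + a + b)·s + n·b ≥ 0 holds if and only if k² − k·(1 + 2b) + n·b + b·s − a·s ≥ 0 holds for every integer k with s ≤ k ≤ n. -/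
/-- For `b < a < n` and `0 < s < n`: `s² - (1+a+b)s + nb ≥ 0` if and only if
`k² - k(1+2b) + nb + bs - as ≥ 0` for every integer `k` with `s ≤ k ≤ n`. -/
theorem quadratic_equivalence (a b n s : ℕ) (hba : b < a) (han : a < n)
    (hs : 0 < s) (hsn : s < n) :
    0 ≤ (s : ℤ) ^ 2 - (1 + a + b) * s + n * b ↔
      ∀ k : ℕ, s ≤ k → k ≤ n →
        0 ≤ (k : ℤ) ^ 2 - k * (1 + 2 * b) + n * b + b * s - a * s := by
  constructor
  · intro h k hk hkn
    rcases le_or_gt s b with hsb | hbs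
    · -- consecutive integers product
      have h1 : 0 ≤ ((k : ℤ) - b) * ((k : ℤ) - b - 1) := by
        rcases le_or_gt (k : ℤ) b with hkb | hkb
        · nlinarith [mul_nonneg (show (0:ℤ) ≤ b - k by linarith) (show (0:ℤ) ≤ b + 1 - k by linarith)]
        · have : (b : ℤ) + 1 ≤ k := by exact_mod_cast hkb
          exact mul_nonneg (by linarith) (by linarith)
      have h2 : 0 ≤ ((b : ℤ) - s) * ((a : ℤ) - b) := by
        have h4 : (s : ℤ) ≤ b := by exact_mod_cast hsb
        have h5 : (b : ℤ) ≤ a := by exact_mod_cast hba.le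
        exact mul_nonneg (by linarith) (by linarith)
      have h3 : 0 ≤ (b : ℤ) * ((n : ℤ) - 1 - a) := by
        have : (a : ℤ) + 1 ≤ n := by exact_mod_cast han
        exact mul_nonneg (by positivity) (by linarith)
      nlinarith [h1, h2, h3]
    · have h1 : 0 ≤ ((k : ℤ) - s) * ((k : ℤ) + s - 1 - 2 * b) := by
        have hks : (s : ℤ) ≤ k := by exact_mod_cast hk
        have hbs' : (b : ℤ) + 1 ≤ s := by exact_mod_cast hbs
        exact mul_nonneg (by linarith) (by linarith)
      nlinarith [h1, h]
  · intro h
    nlinarith [h s le_rfl hsn.le]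
end

section
/- Let a, b, n be positive integers with b < a < n, a + b + 1 ≡ 2bn (mod 4), and (a + b + 1)² > 4bn. Set s = (a + b + 1)/2 (an integer since a + b is odd). Then the sequence (a^s, b^{n−s}) has even sum, has length n, maximal element a, minimal element b, and is nongraphic. -/
/-!
The `s` vertices of degree `a` span at most `s (s - 1)` degree among themselves, and every edge
leaving them ends at one of the `n - s` vertices of degree `b`; so a realisation needs
`s a ≤ s (s - 1) + (n - s) b`, a weak form of the Erdős–Gallai condition at `k = s`.
With `2 s = a + b + 1`, four times the slack `s a - s (s - 1) - (n - s) b` equals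
`(a + b + 1)² - 4 b n`, so the condition fails. The congruence makes `a + b + 1` even and forces
`s ≡ b n (mod 2)`, which is exactly what makes the degree sum even.
-/

open Finset

/-- `twoBlock a b s : Fin n → ℕ` is the sequence `(a^s, b^{n-s})`. -/
def twoBlock (a b s : ℕ) {n : ℕ} : Fin n → ℕ := fun i => if (i : ℕ) < s then a else b

namespace SimpleGraph

variable {V : Type*} (G : SimpleGraph V) [DecidableRel G.Adj]

theorem degree_eq_card_bipartiteAbove_add_compl [Fintype V] [DecidableEq V] (S : Finset V)
    (v : V) : G.degree v = #(S.bipartiteAbove G.Adj v) + #(Sᶜ.bipartiteAbove G.Adj v) := by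
  simp only [degree, neighborFinset_eq_filter, bipartiteAbove, card_filter]
  exact (sum_add_sum_compl S _).symm

theorem card_bipartiteAbove_self_le [DecidableEq V] {S : Finset V} {v : V} (hv : v ∈ S) :
    #(S.bipartiteAbove G.Adj v) ≤ #S - 1 := by
  rw [← card_erase_of_mem hv]
  refine card_le_card fun w hw => ?_
  rw [mem_bipartiteAbove] at hw
  exact mem_erase.mpr ⟨(G.ne_of_adj hw.2).symm, hw.1⟩

theorem card_bipartiteBelow_le_degree [Fintype V] (S : Finset V) (v : V) :
    #(S.bipartiteBelow G.Adj v) ≤ G.degree v := by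
  rw [← card_neighborFinset_eq_degree]
  refine card_le_card fun w hw => ?_
  rw [mem_bipartiteBelow] at hw
  exact (G.mem_neighborFinset v w).mpr hw.2.symm

theorem sum_degree_le_s15 [Fintype V] [DecidableEq V] (S : Finset V) :
    ∑ v ∈ S, G.degree v ≤ #S * (#S - 1) + ∑ w ∈ Sᶜ, G.degree w :=
  calc ∑ v ∈ S, G.degree v
      = ∑ v ∈ S, #(S.bipartiteAbove G.Adj v) + ∑ v ∈ S, #(Sᶜ.bipartiteAbove G.Adj v) := by
        rw [← sum_add_distrib]
        exact sum_congr rfl fun v _ => G.degree_eq_card_bipartiteAbove_add_compl S v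
    _ = ∑ v ∈ S, #(S.bipartiteAbove G.Adj v) + ∑ w ∈ Sᶜ, #(S.bipartiteBelow G.Adj w) := by
        rw [sum_card_bipartiteAbove_eq_sum_card_bipartiteBelow G.Adj (s := S) (t := Sᶜ)]
    _ ≤ ∑ _v ∈ S, (#S - 1) + ∑ w ∈ Sᶜ, G.degree w := by
        gcongr with v hv w
        · exact G.card_bipartiteAbove_self_le hv
        · exact G.card_bipartiteBelow_le_degree S w
    _ = #S * (#S - 1) + ∑ w ∈ Sᶜ, G.degree w := by rw [sum_const, smul_eq_mul]

end SimpleGraph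

theorem IsGraphic.sum_le {n : ℕ} {d : Fin n → ℕ} (hd : IsGraphic d) (S : Finset (Fin n)) :
    ∑ i ∈ S, d i ≤ #S * (#S - 1) + ∑ j ∈ Sᶜ, d j := by
  classical
  obtain ⟨G, hG⟩ := hd
  have hdeg : ∀ i, d i = G.degree i := fun i => by
    rw [← hG i, Set.ncard_eq_toFinset_card', Set.toFinset_card, G.card_neighborSet_eq_degree]
  simp only [hdeg]
  exact G.sum_degree_le_s15 S

section twoBlock

variable {a b s n : ℕ}

theorem twoBlock_of_lt {i : Fin n} (hi : (i : ℕ) < s) : twoBlock a b s i = a := if_pos hi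

theorem twoBlock_of_le {i : Fin n} (hi : s ≤ i) : twoBlock a b s i = b := if_neg (by omega)

theorem Fin.card_filter_val_lt_of_le (hsn : s ≤ n) : #{i : Fin n | (i : ℕ) < s} = s := by
  rw [Fin.card_filter_val_lt, min_eq_right hsn]

theorem sum_twoBlock_filter_val_lt (hsn : s ≤ n) :
    ∑ i ∈ {i : Fin n | (i : ℕ) < s}, twoBlock a b s i = s * a := by
  rw [sum_congr rfl fun i hi => twoBlock_of_lt (mem_filter.mp hi).2, sum_const,
    Fin.card_filter_val_lt_of_le hsn, smul_eq_mul]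

theorem sum_twoBlock_compl_filter_val_lt (hsn : s ≤ n) :
    ∑ i ∈ ({i | (i : ℕ) < s} : Finset (Fin n))ᶜ, twoBlock a b s i = (n - s) * b := by
  rw [sum_congr rfl fun i hi => twoBlock_of_le (by simpa using hi), sum_const, card_compl,
    Fin.card_filter_val_lt_of_le hsn, Fintype.card_fin, smul_eq_mul]

theorem sum_twoBlock (hsn : s ≤ n) : ∑ i : Fin n, twoBlock a b s i = s * a + (n - s) * b := by
  rw [← sum_add_sum_compl {i : Fin n | (i : ℕ) < s}, sum_twoBlock_filter_val_lt hsn,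
    sum_twoBlock_compl_filter_val_lt hsn]

theorem not_isGraphic_twoBlock (hsn : s ≤ n) (h : s * (s - 1) + (n - s) * b < s * a) :
    ¬ IsGraphic (twoBlock a b s (n := n)) := fun hd => by
  have := hd.sum_le {i : Fin n | (i : ℕ) < s}
  rw [sum_twoBlock_filter_val_lt hsn, sum_twoBlock_compl_filter_val_lt hsn,
    Fin.card_filter_val_lt_of_le hsn] at this
  omega

theorem even_mul_add_sub_mul (hsn : s ≤ n) (h2s : 2 * s = a + b + 1)
    (hs : Even s ↔ Even (b * n)) : Even (s * a + (n - s) * b) := by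
  have hab : Even a ↔ ¬Even b := by
    simp only [Nat.even_iff]
    omega
  rw [Nat.even_add, Nat.even_mul, Nat.even_mul, Nat.even_sub hsn]
  rw [Nat.even_mul] at hs
  tauto

theorem mul_sub_one_add_lt_of_sq_gt (hsn : s ≤ n) (h2s : 2 * s = a + b + 1)
    (hgt : 4 * (b * n) < (a + b + 1) ^ 2) : s * (s - 1) + (n - s) * b < s * a := by
  have hs : 1 ≤ s := by omega
  zify [hs, hsn] at *
  nlinarith

end twoBlock

/-- Case (I) of sharpness: if `b < a < n`, `a + b + 1 ≡ 2bn (mod 4)` and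
`(a+b+1)² > 4bn`, then with `s = (a+b+1)/2` the sequence `(a^s, b^{n-s})` has
even sum, maximal element `a`, minimal element `b`, and is nongraphic. -/
theorem sharpness_case_I (a b n : ℕ) (hba : b < a) (han : a < n)
    (hmod : a + b + 1 ≡ 2 * b * n [MOD 4]) (hgt : (a + b + 1) ^ 2 > 4 * (b * n)) :
    Even (∑ i : Fin n, twoBlock a b ((a + b + 1) / 2) i) ∧
      twoBlock a b ((a + b + 1) / 2) (n := n) ⟨0, by omega⟩ = a ∧
      twoBlock a b ((a + b + 1) / 2) (n := n) ⟨n - 1, by omega⟩ = b ∧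
      ¬ IsGraphic (twoBlock a b ((a + b + 1) / 2) (n := n)) := by
  rw [Nat.ModEq, mul_assoc] at hmod
  set s := (a + b + 1) / 2
  have h2s : 2 * s = a + b + 1 := by
    generalize b * n = m at hmod
    omega
  have hs : Even s ↔ Even (b * n) := by
    simp only [Nat.even_iff]
    generalize b * n = m at hmod ⊢
    omega
  have hsn : s < n := by omega
  refine ⟨?_, twoBlock_of_lt (show 0 < s by omega), twoBlock_of_le (show s ≤ n - 1 by omega),
    not_isGraphic_twoBlock hsn.le (mul_sub_one_add_lt_of_sq_gt hsn.le h2s hgt)⟩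
  rw [sum_twoBlock hsn.le]
  exact even_mul_add_sub_mul hsn.le h2s hs
end
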